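/- For θ, φ, ξ ∈ (0, π), the ratio A(θ,φ,ξ)/B(θ,φ,ξ) lies strictly between 0 and 1, where A and B are the Fourier symbols of the 3D isotropic Laplacian and HSSOR preconditioner respectively. -/

import Mathlib

open Real

theorem Real.cos_lt_one_of_mem_Ioo {x : ℝ} (hx : x ∈ Set.Ioo 0 (2 * π)) : cos x < 1 :=
  (cos_le_one x).lt_of_ne fun h =>
    hx.1.ne' ((cos_eq_one_iff_of_lt_of_lt (by linarith [hx.1, pi_pos]) hx.2).1 h)

/-- The twice-nested symbol exceeds `t - 2b - 2c` by exactly `1/t + 1/p`, each level of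
the nesting contributing the reciprocal of its argument. -/
theorem div_nested_add_inv_mem_Ioo {t b c : ℝ} (ht : 0 < t) (hp : 0 < t + 1 / t - 2 * b)
    (ha : 0 < t - 2 * b - 2 * c) :
    let p := t + 1 / t - 2 * b
    (t - 2 * b - 2 * c) / (p + 1 / p - 2 * c) ∈ Set.Ioo 0 1 := by
  intro p
  have hgap : p + 1 / p - 2 * c = (t - 2 * b - 2 * c) + (1 / t + 1 / p) := by
    simp only [p]; ring
  have hd : 0 < 1 / t + 1 / p := by positivity
  rw [hgap]
  exact ⟨div_pos ha (by linarith), (div_lt_one (by linarith)).2 (by linarith)⟩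

theorem ratio_bounds_general (θ φ ξ : ℝ) (hθ : θ ∈ Set.Ioo 0 π) :
    let T := 6 - 2 * Real.cos θ
    let P := T + 1 / T - 2 * Real.cos φ
    let B := P + 1 / P - 2 * Real.cos ξ
    let A := 6 - 2 * Real.cos θ - 2 * Real.cos φ - 2 * Real.cos ξ
    0 < A / B ∧ A / B < 1 := by
  intro T P B A
  have hθ_lt : cos θ < 1 := cos_lt_one_of_mem_Ioo ⟨hθ.1, by linarith [hθ.2, pi_pos]⟩
  have hT : 4 ≤ T := by linarith [cos_le_one θ]
  have hP : 0 < P := by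
    have : 0 < 1 / T := by positivity
    linarith [cos_le_one φ]
  have hA : 0 < A := by linarith [cos_le_one φ, cos_le_one ξ]
  exact div_nested_add_inv_mem_Ioo (by linarith) hP hA

theorem ratio_bounds (θ φ ξ : ℝ) (hθ : θ ∈ Set.Ioo 0 π) (hφ : φ ∈ Set.Ioo 0 π)
    (hξ : ξ ∈ Set.Ioo 0 π) :
    let T := 6 - 2 * Real.cos θ
    let P := T + 1 / T - 2 * Real.cos φ
    let B := P + 1 / P - 2 * Real.cos ξ
    let A := 6 - 2 * Real.cos θ - 2 * Real.cos φ - 2 * Real.cos ξ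
    0 < A / B ∧ A / B < 1 :=
  ratio_bounds_general θ φ ξ hθ
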